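/- Let Q ⊆ ℝ^m be a nonempty closed convex set having the uniform second-order tangent path (uSOTP) property at λ̄ ∈ Q. Then for every w ∈ ℝ^m with w ∉ aff(N_Q(λ̄)), the strict second subderivative satisfies d²_s σ_Q(0|λ̄)(w) = +∞. -/

import Mathlib

open Filter Topology Set
open scoped InnerProductSpace Pointwise

noncomputable section

/-- Support function of `Q ⊆ ℝ^m`, with values in the extended reals. -/
def supportFn {m : ℕ} (Q : Set (EuclideanSpace ℝ (Fin m))) (x : EuclideanSpace ℝ (Fin m)) :
    EReal :=
  ⨆ z ∈ Q, ((⟪z, x⟫_ℝ : ℝ) : EReal)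

/-- The normal cone of a convex set `Q ⊆ ℝ^m` at a point `lam ∈ Q`. -/
def normalCone {m : ℕ} (Q : Set (EuclideanSpace ℝ (Fin m))) (lam : EuclideanSpace ℝ (Fin m)) :
    Set (EuclideanSpace ℝ (Fin m)) :=
  {v | ∀ y ∈ Q, ⟪v, y - lam⟫_ℝ ≤ 0}

/-- The tangent cone of a convex set `Q` at `lam`: the closure of `⋃_{t>0} t • (Q - lam)`. -/
def tangentConeSet {m : ℕ} (Q : Set (EuclideanSpace ℝ (Fin m))) (lam : EuclideanSpace ℝ (Fin m)) :
    Set (EuclideanSpace ℝ (Fin m)) :=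
  closure (⋃ t ∈ Set.Ioi (0 : ℝ), t • ((fun z => z - lam) '' Q))

/-- The lineality space `lin(T_Q(lam)) = T_Q(lam) ∩ (−T_Q(lam))` of the tangent cone. -/
def linTangent {m : ℕ} (Q : Set (EuclideanSpace ℝ (Fin m))) (lam : EuclideanSpace ℝ (Fin m)) :
    Set (EuclideanSpace ℝ (Fin m)) :=
  tangentConeSet Q lam ∩ (-(tangentConeSet Q lam))

/-- The uniform second-order tangent path (uSOTP) property of `Q` at `lam0`. -/
def uSOTP {m : ℕ} (Q : Set (EuclideanSpace ℝ (Fin m))) (lam0 : EuclideanSpace ℝ (Fin m)) : Prop :=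
  ∃ δ > (0 : ℝ), ∃ M > (0 : ℝ), ∃ V ∈ 𝓝 lam0,
    ∃ S : EuclideanSpace ℝ (Fin m) → Submodule ℝ (EuclideanSpace ℝ (Fin m)),
      (∀ lam ∈ Q ∩ V, (S lam : Set (EuclideanSpace ℝ (Fin m))) ⊆ linTangent Q lam) ∧
      (∀ lamSeq : ℕ → EuclideanSpace ℝ (Fin m), (∀ k, lamSeq k ∈ Q) →
        Tendsto lamSeq atTop (𝓝 lam0) →
        (∀ v ∈ linTangent Q lam0, ∃ vs : ℕ → EuclideanSpace ℝ (Fin m),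
          (∀ k, vs k ∈ S (lamSeq k)) ∧ Tendsto vs atTop (𝓝 v)) ∧
        (∀ vs : ℕ → EuclideanSpace ℝ (Fin m), (∀ k, vs k ∈ S (lamSeq k)) →
          ∀ p, MapClusterPt p atTop vs → p ∈ linTangent Q lam0)) ∧
      (∀ lam ∈ Q ∩ V, ∀ v ∈ S lam, ‖v‖ = 1 →
        ∃ r : ℝ → EuclideanSpace ℝ (Fin m),
          ∀ t ∈ Set.Icc (0 : ℝ) δ, ‖r t‖ ≤ M ∧ lam + t • v + (t ^ 2 / 2) • r t ∈ Q)

/-- Second-order difference quotient `Δ²_t f(x|v)(h)`. -/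
def secondDQ {n : ℕ} (f : EuclideanSpace ℝ (Fin n) → EReal)
    (x v : EuclideanSpace ℝ (Fin n)) (t : ℝ) (h : EuclideanSpace ℝ (Fin n)) : EReal :=
  ((2 / t ^ 2 : ℝ) : EReal) * (f (x + t • h) - f x - ((t * ⟪v, h⟫_ℝ : ℝ) : EReal))

/-- Strict second subderivative of the support function `σ_Q` at `0` for `lam0` in direction `w`. -/
def strictD2supp {m : ℕ} (Q : Set (EuclideanSpace ℝ (Fin m))) (lam0 : EuclideanSpace ℝ (Fin m))
    (w : EuclideanSpace ℝ (Fin m)) : EReal :=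
  liminf
    (fun p : ℝ × EuclideanSpace ℝ (Fin m) × EuclideanSpace ℝ (Fin m) × EuclideanSpace ℝ (Fin m) =>
      secondDQ (supportFn Q) p.2.2.1 p.2.2.2 p.1 p.2.1)
    (((𝓝[>] (0 : ℝ)) ×ˢ (𝓝 w ×ˢ (𝓝 (0 : EuclideanSpace ℝ (Fin m)) ×ˢ 𝓝 lam0))) ⊓
      Filter.principal
        {p : ℝ × EuclideanSpace ℝ (Fin m) × EuclideanSpace ℝ (Fin m) × EuclideanSpace ℝ (Fin m) |
          p.2.2.2 ∈ Q ∧ supportFn Q p.2.2.1 = ((⟪p.2.2.2, p.2.2.1⟫_ℝ : ℝ) : EReal)})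

/-- Strict second subderivative of `φ = σ_Q ∘ F` at `xbar` for `vbar` in direction `h`. -/
def strictD2phi {n m : ℕ} (Q : Set (EuclideanSpace ℝ (Fin m)))
    (F : EuclideanSpace ℝ (Fin n) → EuclideanSpace ℝ (Fin m))
    (F' : EuclideanSpace ℝ (Fin n) → (EuclideanSpace ℝ (Fin n) →L[ℝ] EuclideanSpace ℝ (Fin m)))
    (xbar vbar h : EuclideanSpace ℝ (Fin n)) : EReal :=
  liminf
    (fun p : ℝ × EuclideanSpace ℝ (Fin n) × EuclideanSpace ℝ (Fin n) × EuclideanSpace ℝ (Fin n) =>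
      secondDQ (fun x => supportFn Q (F x)) p.2.2.1 p.2.2.2 p.1 p.2.1)
    (((𝓝[>] (0 : ℝ)) ×ˢ (𝓝 h ×ˢ (𝓝 xbar ×ˢ 𝓝 vbar))) ⊓
      Filter.principal
        {p : ℝ × EuclideanSpace ℝ (Fin n) × EuclideanSpace ℝ (Fin n) × EuclideanSpace ℝ (Fin n) |
          ∃ lam ∈ Q, p.2.2.2 = ContinuousLinearMap.adjoint (F' p.2.2.1) lam ∧
            supportFn Q (F p.2.2.1) = ((⟪lam, F p.2.2.1⟫_ℝ : ℝ) : EReal)})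

/-!
Since `0 ∈ N_Q(λ̄)`, the affine hull of the normal cone is its linear span, so `w` has a component
`v₀ ≠ 0` orthogonal to `N_Q(λ̄)`; by polarity `±v₀ ∈ T_Q(λ̄)`, i.e. `v₀ ∈ lin T_Q(λ̄)`, and
`⟪v₀, w⟫ > 0`. Near `λ̄` the uSOTP subspaces `S(λ)` contain unit vectors `v` close to `v₀`, with
second-order paths `λ + s v + (s²/2) r(s) ∈ Q`. If `σ_Q(x) = ⟪λ, x⟫` then `x ∈ N_Q(λ)` is orthogonal
to `v ∈ lin T_Q(λ)`, so testing `σ_Q(x + t w̃)` at the path point with `s = α t` bounds the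
second-order quotient below by `2α⟪v, w̃⟫ - α² M ‖x + t w̃‖`, which is about `2α⟪v₀, w⟫`.
Since `α` is arbitrary, the liminf is `+∞`.
-/

section

variable {m : ℕ} {Q : Set (EuclideanSpace ℝ (Fin m))} {lam n v x : EuclideanSpace ℝ (Fin m)}

lemma le_supportFn {z : EuclideanSpace ℝ (Fin m)} (hz : z ∈ Q) (x : EuclideanSpace ℝ (Fin m)) :
    ((⟪z, x⟫_ℝ : ℝ) : EReal) ≤ supportFn Q x :=
  le_iSup₂ (f := fun z (_ : z ∈ Q) => ((⟪z, x⟫_ℝ : ℝ) : EReal)) z hz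

lemma mem_normalCone_of_supportFn_eq (hx : supportFn Q x = ((⟪lam, x⟫_ℝ : ℝ) : EReal)) :
    x ∈ normalCone Q lam := by
  intro y hy
  have hle := le_supportFn hy x
  rw [hx, EReal.coe_le_coe_iff] at hle
  rw [real_inner_comm, inner_sub_left]
  linarith

lemma inner_nonpos_of_mem_tangentConeSet (hn : n ∈ normalCone Q lam)
    (hv : v ∈ tangentConeSet Q lam) : ⟪n, v⟫_ℝ ≤ 0 := by
  have hclosed : IsClosed {y : EuclideanSpace ℝ (Fin m) | ⟪n, y⟫_ℝ ≤ 0} :=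
    isClosed_le (by fun_prop) continuous_const
  refine closure_minimal ?_ hclosed hv
  simp only [iUnion_subset_iff]
  rintro t ht _ ⟨_, ⟨z, hz, rfl⟩, rfl⟩
  simpa only [mem_ofPred_eq, inner_smul_right] using
    mul_nonpos_of_nonneg_of_nonpos (le_of_lt ht) (hn z hz)

lemma inner_eq_zero_of_mem_linTangent (hn : n ∈ normalCone Q lam)
    (hv : v ∈ linTangent Q lam) : ⟪n, v⟫_ℝ = 0 := by
  have hneg := inner_nonpos_of_mem_tangentConeSet hn hv.2
  rw [inner_neg_right] at hneg
  linarith [inner_nonpos_of_mem_tangentConeSet hn hv.1]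

lemma smul_sub_mem_tangentConeSet {t : ℝ} (ht : 0 < t) {z : EuclideanSpace ℝ (Fin m)}
    (hz : z ∈ Q) : t • (z - lam) ∈ tangentConeSet Q lam :=
  subset_closure <| mem_biUnion ht <| smul_mem_smul_set <| mem_image_of_mem _ hz

lemma convex_tangentConeSet (hQ : Convex ℝ Q) (lam : EuclideanSpace ℝ (Fin m)) :
    Convex ℝ (tangentConeSet Q lam) := by
  have hshift : Convex ℝ ((fun z => z - lam) '' Q) := by
    simpa only [sub_eq_neg_add] using hQ.translate (-lam)
  have hcone : (⋃ t ∈ Ioi (0 : ℝ), t • ((fun z => z - lam) '' Q)) =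
      (ConvexCone.hull ℝ ((fun z => z - lam) '' Q) : Set (EuclideanSpace ℝ (Fin m))) := by
    ext y
    simp [ConvexCone.coe_hull_of_convex hshift]
  rw [tangentConeSet, hcone]
  exact (ConvexCone.hull ℝ _).convex.closure

lemma mem_tangentConeSet_of_forall_inner_nonpos (hQ : Convex ℝ Q) (hlam : lam ∈ Q)
    (hv : ∀ n ∈ normalCone Q lam, ⟪n, v⟫_ℝ ≤ 0) : v ∈ tangentConeSet Q lam := by
  by_contra hvT
  obtain ⟨f, u, hfT, hfv⟩ :=
    geometric_hahn_banach_closed_point (convex_tangentConeSet hQ lam) isClosed_closure hvT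
  have hu : 0 < u := by
    simpa using hfT 0 (by simpa using smul_sub_mem_tangentConeSet (lam := lam) one_pos hlam)
  set n := (InnerProductSpace.toDual ℝ (EuclideanSpace ℝ (Fin m))).symm f
  have hn : ∀ y, ⟪n, y⟫_ℝ = f y := fun y => InnerProductSpace.toDual_symm_apply
  -- a linear functional bounded above on a cone is nonpositive on it
  have hnN : n ∈ normalCone Q lam := by
    intro z hz
    by_contra! hpos
    have hlt := hfT _ (smul_sub_mem_tangentConeSet (div_pos hu hpos) hz)
    rw [map_smul, smul_eq_mul, ← hn, div_mul_cancel₀ _ hpos.ne'] at hlt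
    exact lt_irrefl u hlt
  linarith [hv n hnN, hn v]

lemma mem_linTangent_of_mem_orthogonal (hQ : Convex ℝ Q) (hlam : lam ∈ Q)
    (hv : v ∈ (Submodule.span ℝ (normalCone Q lam))ᗮ) : v ∈ linTangent Q lam := by
  have hperp : ∀ n ∈ normalCone Q lam, ⟪n, v⟫_ℝ = 0 := fun n hn =>
    (Submodule.mem_orthogonal _ v).mp hv n (Submodule.subset_span hn)
  refine ⟨mem_tangentConeSet_of_forall_inner_nonpos hQ hlam fun n hn => (hperp n hn).le,
    mem_tangentConeSet_of_forall_inner_nonpos hQ hlam fun n hn => ?_⟩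
  rw [inner_neg_right, hperp n hn, neg_zero]

lemma zero_mem_normalCone : (0 : EuclideanSpace ℝ (Fin m)) ∈ normalCone Q lam := by
  intro y _
  simp

lemma affineSpan_normalCone :
    (affineSpan ℝ (normalCone Q lam) : Set (EuclideanSpace ℝ (Fin m))) =
      Submodule.span ℝ (normalCone Q lam) := by
  rw [← affineSpan_insert_zero, insert_eq_of_mem zero_mem_normalCone]

lemma coe_le_secondDQ {f : EuclideanSpace ℝ (Fin m) → EReal} {h : EuclideanSpace ℝ (Fin m)}
    {a t q : ℝ} (ht : 0 < t) (hfx : f x = a)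
    (hle : ((a + t * ⟪v, h⟫_ℝ + t ^ 2 / 2 * q : ℝ) : EReal) ≤ f (x + t • h)) :
    (q : EReal) ≤ secondDQ f x v t h := by
  have hsub : ((t ^ 2 / 2 * q : ℝ) : EReal) ≤
      f (x + t • h) - f x - ((t * ⟪v, h⟫_ℝ : ℝ) : EReal) := by
    rw [hfx]
    refine le_trans (le_of_eq ?_) (EReal.sub_le_sub (EReal.sub_le_sub hle le_rfl) le_rfl)
    rw [← EReal.coe_sub, ← EReal.coe_sub]
    congr 1
    ring
  calc (q : EReal) = ((2 / t ^ 2 : ℝ) : EReal) * ((t ^ 2 / 2 * q : ℝ) : EReal) := by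
        rw [← EReal.coe_mul]
        congr 1
        field_simp
    _ ≤ secondDQ f x v t h :=
        mul_le_mul_of_nonneg_left hsub (EReal.coe_nonneg.mpr (by positivity))

lemma coe_le_secondDQ_supportFn {h r : EuclideanSpace ℝ (Fin m)} {t α M : ℝ} (ht : 0 < t)
    (hx : supportFn Q x = ((⟪lam, x⟫_ℝ : ℝ) : EReal)) (hv : v ∈ linTangent Q lam)
    (hz : lam + (α * t) • v + ((α * t) ^ 2 / 2) • r ∈ Q) (hr : ‖r‖ ≤ M) :
    ((2 * α * ⟪v, h⟫_ℝ - α ^ 2 * M * ‖x + t • h‖ : ℝ) : EReal) ≤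
      secondDQ (supportFn Q) x lam t h := by
  refine coe_le_secondDQ ht hx (le_trans ?_ (le_supportFn hz (x + t • h)))
  have hxv : ⟪v, x⟫_ℝ = 0 := by
    rw [real_inner_comm]
    exact inner_eq_zero_of_mem_linTangent (mem_normalCone_of_supportFn_eq hx) hv
  have hrM : -(M * ‖x + t • h‖) ≤ ⟪r, x + t • h⟫_ℝ :=
    (abs_le.mp ((abs_real_inner_le_norm _ _).trans
      (mul_le_mul_of_nonneg_right hr (norm_nonneg _)))).1
  have hexpand : ⟪lam + (α * t) • v + ((α * t) ^ 2 / 2) • r, x + t • h⟫_ℝ =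
      ⟪lam, x⟫_ℝ + t * ⟪lam, h⟫_ℝ + α * t ^ 2 * ⟪v, h⟫_ℝ
        + (α * t) ^ 2 / 2 * ⟪r, x + t • h⟫_ℝ := by
    simp only [inner_add_left, inner_add_right, real_inner_smul_left, real_inner_smul_right, hxv]
    ring
  rw [EReal.coe_le_coe_iff, hexpand]
  nlinarith [mul_le_mul_of_nonneg_left hrM (by positivity : (0 : ℝ) ≤ (α * t) ^ 2 / 2)]

end

lemma Submodule.exists_norm_eq_one_mem_orthogonal_inner_pos {E : Type*} [NormedAddCommGroup E]
    [InnerProductSpace ℝ E] (K : Submodule ℝ E) [K.HasOrthogonalProjection] {w : E}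
    (hw : w ∉ K) : ∃ v ∈ Kᗮ, ‖v‖ = 1 ∧ 0 < ⟪v, w⟫_ℝ := by
  set u := w - K.starProjection w
  have hu : u ≠ 0 := fun h => hw (sub_eq_zero.mp h ▸ K.starProjection_apply_mem w)
  have huw : ⟪u, w⟫_ℝ = ‖u‖ ^ 2 := by
    have hw' : w = u + K.starProjection w := by simp [u]
    conv_lhs => rw [hw']
    rw [inner_add_right, K.starProjection_inner_eq_zero _ _ (K.starProjection_apply_mem w),
      real_inner_self_eq_norm_sq, add_zero]
  have hupos : 0 < ‖u‖ := norm_pos_iff.mpr hu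
  refine ⟨‖u‖⁻¹ • u, Kᗮ.smul_mem _ (K.sub_starProjection_mem_orthogonal w), ?_, ?_⟩
  · rw [norm_smul, norm_inv, norm_norm, inv_mul_cancel₀ hupos.ne']
  · rw [real_inner_smul_left, huw]
    positivity

lemma eventually_exists_norm_eq_one_norm_sub_le {E : Type*} [NormedAddCommGroup E]
    [NormedSpace ℝ E] {Q : Set E} {lam0 v0 : E} (S : E → Submodule ℝ E)
    (hS : ∀ lamSeq : ℕ → E, (∀ k, lamSeq k ∈ Q) → Tendsto lamSeq atTop (𝓝 lam0) →
      ∃ vs : ℕ → E, (∀ k, vs k ∈ S (lamSeq k)) ∧ Tendsto vs atTop (𝓝 v0))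
    (hv0 : ‖v0‖ = 1) {η : ℝ} (hη : 0 < η) :
    ∀ᶠ lam in 𝓝 lam0, lam ∈ Q → ∃ v ∈ S lam, ‖v‖ = 1 ∧ ‖v - v0‖ ≤ η := by
  by_contra hcon
  obtain ⟨lamSeq, hlim, hbad⟩ :=
    exists_seq_forall_of_frequently
      ((not_eventually.mp hcon).mono fun _ h => Classical.not_imp.mp h)
  obtain ⟨vs, hvsS, hvs⟩ := hS lamSeq (fun k => (hbad k).1) hlim
  have hunit : Tendsto (fun k => ‖vs k‖⁻¹ • vs k) atTop (𝓝 v0) := by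
    simpa [hv0] using (hvs.norm.inv₀ (by simp [hv0])).smul hvs
  obtain ⟨k, hk0, hkη⟩ := ((hvs.norm.eventually_ne (by simp [hv0] : ‖v0‖ ≠ 0)).and
    (hunit.eventually (Metric.closedBall_mem_nhds v0 hη))).exists
  refine (hbad k).2 ⟨_, (S _).smul_mem _ (hvsS k), ?_, by rwa [← dist_eq_norm]⟩
  rw [norm_smul, norm_inv, norm_norm, inv_mul_cancel₀ hk0]

lemma eventually_coe_le_secondDQ_supportFn {m : ℕ} {Q : Set (EuclideanSpace ℝ (Fin m))}
    {lam0 v0 w : EuclideanSpace ℝ (Fin m)} (husotp : uSOTP Q lam0)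
    (hv0 : v0 ∈ linTangent Q lam0) (hv0n : ‖v0‖ = 1) (hw : 0 < ⟪v0, w⟫_ℝ) {α : ℝ} (hα : 0 < α) :
    ∀ᶠ p in (𝓝[>] (0 : ℝ) ×ˢ (𝓝 w ×ˢ (𝓝 0 ×ˢ 𝓝 lam0))) ⊓
        𝓟 {p | p.2.2.2 ∈ Q ∧ supportFn Q p.2.2.1 = ((⟪p.2.2.2, p.2.2.1⟫_ℝ : ℝ) : EReal)},
      ((α * ⟪v0, w⟫_ℝ - 1 : ℝ) : EReal) ≤ secondDQ (supportFn Q) p.2.2.1 p.2.2.2 p.1 p.2.1 := by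
  obtain ⟨δ, hδ, M, -, V, hV, S, hSlin, hSlim, hSpath⟩ := husotp
  set c := ⟪v0, w⟫_ℝ
  set η := c / (2 * (‖w‖ + 1))
  have hη : 0 < η := by positivity
  have hηw : η * ‖w‖ < c / 2 := by
    have : η * (‖w‖ + 1) = c / 2 := by simp only [η]; field_simp
    nlinarith
  have hgood := eventually_exists_norm_eq_one_norm_sub_le S
    (fun lamSeq hQ hlim => (hSlim lamSeq hQ hlim).1 v0 hv0) hv0n hη
  set p0 : ℝ × EuclideanSpace ℝ (Fin m) × EuclideanSpace ℝ (Fin m) × EuclideanSpace ℝ (Fin m) :=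
    (0, w, 0, lam0)
  have hF : 𝓝[>] (0 : ℝ) ×ˢ (𝓝 w ×ˢ (𝓝 0 ×ˢ 𝓝 lam0)) ≤ 𝓝 p0 := by
    simp only [p0, nhds_prod_eq]
    exact Filter.prod_mono nhdsWithin_le_nhds le_rfl
  have hstep : ∀ᶠ p in 𝓝 p0, α * p.1 ≤ δ :=
    ((continuous_const.mul continuous_fst).tendsto' p0 0 (by simp [p0])).eventually
      (eventually_le_nhds hδ)
  have hsmall : ∀ᶠ p in 𝓝 p0, α ^ 2 * M * ‖p.2.2.1 + p.1 • p.2.1‖ ≤ 1 :=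
    ((by fun_prop : Continuous fun p : ℝ × EuclideanSpace ℝ (Fin m) × EuclideanSpace ℝ (Fin m) ×
        EuclideanSpace ℝ (Fin m) => α ^ 2 * M * ‖p.2.2.1 + p.1 • p.2.1‖).tendsto' p0 0
      (by simp [p0])).eventually (eventually_le_nhds one_pos)
  have hdir : ∀ᶠ p in 𝓝 p0, c / 2 ≤ ⟪v0, p.2.1⟫_ℝ - η * ‖p.2.1‖ :=
    ((by fun_prop : Continuous fun p : ℝ × EuclideanSpace ℝ (Fin m) × EuclideanSpace ℝ (Fin m) ×
        EuclideanSpace ℝ (Fin m) => ⟪v0, p.2.1⟫_ℝ - η * ‖p.2.1‖).tendsto p0).eventually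
      (eventually_ge_nhds (by simp only [p0]; linarith))
  have hnear := (continuous_snd.snd.snd.tendsto p0).eventually
    ((eventually_mem_set.mpr hV).and hgood)
  rw [eventually_inf_principal]
  filter_upwards [tendsto_fst.eventually eventually_mem_nhdsWithin,
    hF (hstep.and (hsmall.and (hdir.and hnear)))]
    with ⟨t, h, x, lam⟩ ht ⟨hαt, hy, hdirp, hlamV, hgoodp⟩ ⟨hlamQ, hx⟩
  obtain ⟨v, hvS, hvn, hvv0⟩ := hgoodp hlamQ
  obtain ⟨r, hr⟩ := hSpath lam ⟨hlamQ, hlamV⟩ v hvS hvn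
  obtain ⟨hrM, hz⟩ := hr (α * t) ⟨mul_nonneg hα.le (le_of_lt ht), hαt⟩
  have hvh : c / 2 ≤ ⟪v, h⟫_ℝ := by
    have hclose : |⟪v - v0, h⟫_ℝ| ≤ η * ‖h‖ :=
      (abs_real_inner_le_norm _ _).trans (mul_le_mul_of_nonneg_right hvv0 (norm_nonneg _))
    rw [inner_sub_left] at hclose
    linarith [(abs_le.mp hclose).1]
  refine le_trans ?_ (coe_le_secondDQ_supportFn ht hx (hSlin lam ⟨hlamQ, hlamV⟩ hvS) hz hrM)
  rw [EReal.coe_le_coe_iff]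
  nlinarith [mul_le_mul_of_nonneg_left hvh hα.le]

lemma strictD2supp_eq_top_of_mem_linTangent {m : ℕ} {Q : Set (EuclideanSpace ℝ (Fin m))}
    {lam0 v0 w : EuclideanSpace ℝ (Fin m)} (husotp : uSOTP Q lam0)
    (hv0 : v0 ∈ linTangent Q lam0) (hv0n : ‖v0‖ = 1) (hw : 0 < ⟪v0, w⟫_ℝ) :
    strictD2supp Q lam0 w = ⊤ := by
  rw [EReal.eq_top_iff_forall_lt]
  intro C
  have hα : 0 < (|C| + 2) / ⟪v0, w⟫_ℝ := by positivity
  refine lt_of_lt_of_le ?_ (le_liminf_of_le (by isBoundedDefault)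
    (eventually_coe_le_secondDQ_supportFn husotp hv0 hv0n hw hα))
  rw [EReal.coe_lt_coe_iff, div_mul_cancel₀ _ hw.ne']
  linarith [le_abs_self C]

theorem stmt18_general {m : ℕ} (Q : Set (EuclideanSpace ℝ (Fin m)))
    (hQconv : Convex ℝ Q)
    (lambar : EuclideanSpace ℝ (Fin m)) (hlambar : lambar ∈ Q)
    (husotp : uSOTP Q lambar) :
    ∀ w : EuclideanSpace ℝ (Fin m),
      w ∉ (affineSpan ℝ (normalCone Q lambar) : Set (EuclideanSpace ℝ (Fin m))) →
        strictD2supp Q lambar w = ⊤ := by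
  intro w hw
  rw [affineSpan_normalCone, SetLike.mem_coe] at hw
  obtain ⟨v0, hv0, hv0n, hv0w⟩ :=
    (Submodule.span ℝ (normalCone Q lambar)).exists_norm_eq_one_mem_orthogonal_inner_pos hw
  exact strictD2supp_eq_top_of_mem_linTangent husotp
    (mem_linTangent_of_mem_orthogonal hQconv hlambar hv0) hv0n hv0w

theorem stmt18 {m : ℕ} (Q : Set (EuclideanSpace ℝ (Fin m)))
    (hQne : Q.Nonempty) (hQc : IsClosed Q) (hQconv : Convex ℝ Q)
    (lambar : EuclideanSpace ℝ (Fin m)) (hlambar : lambar ∈ Q)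
    (husotp : uSOTP Q lambar) :
    ∀ w : EuclideanSpace ℝ (Fin m),
      w ∉ (affineSpan ℝ (normalCone Q lambar) : Set (EuclideanSpace ℝ (Fin m))) →
        strictD2supp Q lambar w = ⊤ :=
  stmt18_general Q hQconv lambar hlambar husotp
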